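/- Given a Cliffordinkra with n colors, define linear maps Γ_1,...,Γ_n on the free real vector space on the vertices by Γ_i(v) = w if v and w are joined by a solid edge of color i, and Γ_i(v) = -w if joined by a dashed edge of color i. Then Γ_iΓ_j + Γ_jΓ_i = 2δ_{ij}·I, so these maps furnish a representation of the Clifford algebra Cl(0,n). -/
import Mathlib


/-- A Cliffordinkra with `n` colors on vertex set `V`.  For each color `i`,
`edge i v` is the unique vertex joined to `v` by the edge of color `i`, and
`dashed i v` records whether that edge is dashed.  -/
structure Cliffordinkra (V : Type*) (n : ℕ) where
  /-- bipartition into bosons and fermions -/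
  isBoson : V → Prop
  /-- the other end of the edge of color `i` at `v` -/
  edge : Fin n → V → V
  /-- whether the edge of color `i` at `v` is dashed -/
  dashed : Fin n → V → Bool
  edge_invol : ∀ i v, edge i (edge i v) = v
  edge_ne : ∀ i v, edge i v ≠ v
  bipartite : ∀ i v, isBoson v ↔ ¬ isBoson (edge i v)
  dashed_wellDef : ∀ i v, dashed i (edge i v) = dashed i v
  quad : ∀ i j v, i ≠ j → edge i (edge j (edge i (edge j v))) = v
  odd_dash : ∀ i j v, i ≠ j →
    Odd ((if dashed j v then 1 else 0) + (if dashed i (edge j v) then 1 else 0) +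
      (if dashed j (edge i (edge j v)) then 1 else 0) + (if dashed i v then 1 else 0))

/-- The linear map `Γ i` on the free real vector space on the vertices:
`Γ i (v) = ± (edge i v)`, with minus sign exactly when the edge is dashed. -/
noncomputable def Gamma {V : Type*} {n : ℕ} (A : Cliffordinkra V n) (i : Fin n) :
    (V →₀ ℝ) →ₗ[ℝ] (V →₀ ℝ) :=
  (Finsupp.lift (V →₀ ℝ) ℝ V) (fun w =>
    if A.dashed i w then -(Finsupp.single (A.edge i w) (1 : ℝ))
    else Finsupp.single (A.edge i w) (1 : ℝ))

lemma Gamma_single {V : Type*} {n : ℕ} (A : Cliffordinkra V n) (i : Fin n) (w : V) :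
    Gamma A i (Finsupp.single w 1) =
      if A.dashed i w then -(Finsupp.single (A.edge i w) (1 : ℝ))
      else Finsupp.single (A.edge i w) (1 : ℝ) := by
  simp [Gamma, Finsupp.lift_apply, Finsupp.sum_single_index]

lemma edge_comm {V : Type*} {n : ℕ} (A : Cliffordinkra V n) {i j : Fin n} (h : i ≠ j) (w : V) :
    A.edge j (A.edge i w) = A.edge i (A.edge j w) := by
  have q := A.quad i j w h
  have : A.edge j (A.edge i (A.edge j w)) = A.edge i w := by
    have := congrArg (A.edge i) q
    rwa [A.edge_invol] at this
  calc A.edge j (A.edge i w) = A.edge j (A.edge j (A.edge i (A.edge j w))) := by rw [this]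
    _ = A.edge i (A.edge j w) := A.edge_invol _ _

/-- The maps `Γ i` coming from a Cliffordinkra satisfy the Clifford algebra
relations `Γ i Γ j + Γ j Γ i = 2 δ_{ij} I`, furnishing a representation
of `Cl(0,n)`. -/
theorem cliffordinkra_clifford_relations {V : Type*} {n : ℕ}
    (A : Cliffordinkra V n) (i j : Fin n) :
    (Gamma A i).comp (Gamma A j) + (Gamma A j).comp (Gamma A i) =
      if i = j then (2 : ℝ) • LinearMap.id else 0 := by
  apply Finsupp.lhom_ext'
  intro w
  apply LinearMap.ext_ring
  simp only [LinearMap.comp_apply, LinearMap.add_apply, LinearMap.coe_comp,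
    Function.comp_apply, Gamma_single]
  by_cases hij : i = j
  · subst hij
    simp only [if_pos rfl]
    by_cases h : A.dashed i w <;>
      simp [h, Gamma_single, A.dashed_wellDef, A.edge_invol, two_smul]
  · have hji : j ≠ i := Ne.symm hij
    have hcomm := edge_comm A hij w
    have hodd := A.odd_dash i j w hij
    have hd : A.dashed j (A.edge i (A.edge j w)) = A.dashed j (A.edge i w) := by
      rw [← hcomm, A.dashed_wellDef]
    rw [hd] at hodd
    simp only [if_neg hij]
    by_cases h1 : A.dashed j w <;> by_cases h2 : A.dashed i (A.edge j w) <;>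
      by_cases h3 : A.dashed j (A.edge i w) <;> by_cases h4 : A.dashed i w <;>
      simp [h1, h2, h3, h4, Gamma_single, hcomm] at hodd ⊢ <;>
      exact absurd hodd (by decide)
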